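/- Let h : I → ℝ be a measurable function on an interval I ⊆ ℝ and let a > 0. For any ν ∈ 𝒫₁(a^{−1}I), the pushforward ν_{#a} := (D_a)_*ν under the dilation D_a(s) = as lies in 𝒫_{a²}(I), and ∫ h(as) dν(s) − D_KL(ν|γ) = ∫ h dν_{#a} − D_KL(ν_{#a}|γ) − ½(1−a²) − log a. In particular, sup_{ν ∈ 𝒫₁(a^{−1}I)} { ∫ h(as) dν(s) − D_KL(ν|γ) } = sup_{ν ∈ 𝒫_{a²}(I)} { ∫ h dν − D_KL(ν|γ) } − ½(1−a²) − log a. -/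

import Mathlib

open MeasureTheory ProbabilityTheory
open scoped ENNReal NNReal Topology

noncomputable section

namespace WignerLDP

/-- The (two-sided) log-Laplace transform of `μ`. -/
def logLaplace (μ : Measure ℝ) (t : ℝ) : ℝ :=
  Real.log (∫ x, Real.exp (t * x) ∂μ)

/-- `ψ_μ(t) = Λ_μ(t)/t²`, extended by `ψ_μ(0) = 1/2`. -/
def psiMu (μ : Measure ℝ) (t : ℝ) : ℝ :=
  if t = 0 then 1 / 2 else logLaplace μ t / t ^ 2

/-- `ψ_μ^max = sup_{t ∈ ℝ} ψ_μ(t)`. -/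
def psiMax (μ : Measure ℝ) : ℝ :=
  sSup (Set.range (psiMu μ))

/-- `ψ_μ^∞ = limsup_{|t| → ∞} ψ_μ(t)`. -/
def psiInf (μ : Measure ℝ) : ℝ :=
  Filter.limsup (psiMu μ) (Filter.atBot ⊔ Filter.atTop)

/-- `μ` is centered with unit second moment. -/
def Standardized (μ : Measure ℝ) : Prop :=
  Integrable (fun x : ℝ => x) μ ∧ Integrable (fun x : ℝ => x ^ 2) μ ∧
    (∫ x, x ∂μ) = 0 ∧ (∫ x, x ^ 2 ∂μ) = 1

/-- sub-Gaussian (SG): finite exponential moments and `ψ_μ^max < ∞`. -/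
def SubG (μ : Measure ℝ) : Prop :=
  (∀ t : ℝ, Integrable (fun x => Real.exp (t * x)) μ) ∧
    ∃ K : ℝ, ∀ t : ℝ, t ≠ 0 → logLaplace μ t / t ^ 2 ≤ K

/-- uniformly sub-Gaussian tilts (USG): `sup_t Λ_μ''(t) < ∞`. -/
def USG (μ : Measure ℝ) : Prop :=
  (∀ t : ℝ, Integrable (fun x => Real.exp (t * x)) μ) ∧
    ContDiff ℝ 2 (logLaplace μ) ∧
    ∃ C : ℝ, ∀ t : ℝ, deriv (deriv (logLaplace μ)) t ≤ C

/-- Configuration space for the independent entries on and above the diagonal. -/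
abbrev Config (N : ℕ) : Type :=
  { p : Fin N × Fin N // p.1 ≤ p.2 } → ℝ

/-- Joint law of the array of i.i.d. entries with marginal `μ`. -/
def wignerMeasure (μ : Measure ℝ) (N : ℕ) : Measure (Config N) :=
  Measure.pi fun _ => μ

/-- The symmetric array `X_{ij}` of entries. -/
def entry (N : ℕ) (ω : Config N) (i j : Fin N) : ℝ :=
  if h : i ≤ j then ω ⟨(i, j), h⟩ else ω ⟨(j, i), le_of_not_ge h⟩

/-- The Wigner matrix `H_{ij} = √(2^{1(i=j)}/N) X_{ij}`. -/
def wignerMatrix (N : ℕ) (ω : Config N) : Matrix (Fin N) (Fin N) ℝ :=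
  fun i j => Real.sqrt ((if i = j then 2 else 1) / (N : ℝ)) * entry N ω i j

/-- Largest eigenvalue of a symmetric matrix. -/
def lambda1 {N : ℕ} (M : Matrix (Fin N) (Fin N) ℝ) : ℝ :=
  sSup (spectrum ℝ M)

/-- The ℓ² → ℓ² operator norm. -/
def opNorm {N : ℕ} (M : Matrix (Fin N) (Fin N) ℝ) : ℝ :=
  sSup { r | ∃ u : Fin N → ℝ, (∑ i, u i ^ 2) = 1 ∧
    r = Real.sqrt (∑ i, (M.mulVec u i) ^ 2) }

/-- `v` is a unit eigenvector of `M` for the top eigenvalue. -/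
def IsTopEigenvector {N : ℕ} (M : Matrix (Fin N) (Fin N) ℝ) (v : Fin N → ℝ) : Prop :=
  (∑ i, v i ^ 2) = 1 ∧ M.mulVec v = lambda1 M • v

/-- The semicircle measure. -/
def semicircle : Measure ℝ :=
  volume.withDensity fun x => ENNReal.ofReal (Real.sqrt (4 - x ^ 2) / (2 * Real.pi))

/-- `θ_-(x) = (x - √(x²-4))/4`. -/
def thetaMinus (x : ℝ) : ℝ := (x - Real.sqrt (x ^ 2 - 4)) / 4

/-- The limiting quenched free energy `J(x,θ)`. -/
def Jfun (x θ : ℝ) : ℝ :=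
  if θ ≤ thetaMinus x then θ ^ 2
  else θ * x - (1 / 2) * (∫ l, Real.log (x - l) ∂semicircle)
        - (1 / 2) * Real.log (2 * θ) - 1 / 2

/-- `q_x(θ) = (1 - θ_-(x)/θ)_+^{1/2}`, with `q_x(0) = 0`. -/
def qfun (x θ : ℝ) : ℝ :=
  if θ = 0 then 0 else Real.sqrt (max 0 (1 - thetaMinus x / θ))

/-- GOE rate function (value for `x ≥ 2`). -/
def IgammaR (x : ℝ) : ℝ := (1 / 2) * ∫ y in (2:ℝ)..x, Real.sqrt (y ^ 2 - 4)

/-- GOE rate function with value `∞` below `2`. -/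
def IgammaE (x : ℝ) : ℝ≥0∞ := if 2 ≤ x then ENNReal.ofReal (IgammaR x) else ⊤

/-- The standard Gaussian measure on `ℝ`. -/
def stdGaussian : Measure ℝ := gaussianReal 0 1

/-- Borel probability measure supported on `S` with second moment `α`. -/
def IsP2 (ν : Measure ℝ) (S : Set ℝ) (α : ℝ) : Prop :=
  IsProbabilityMeasure ν ∧ ν Sᶜ = 0 ∧ Integrable (fun s : ℝ => s ^ 2) ν ∧
    (∫ s, s ^ 2 ∂ν) = α

/-- `ν` has finite relative entropy w.r.t. the standard Gaussian. -/
def FiniteKL (ν : Measure ℝ) : Prop :=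
  ν ≪ stdGaussian ∧
    Integrable (fun s => Real.log ((ν.rnDeriv stdGaussian s).toReal)) ν

/-- The relative entropy `D_KL(ν|γ)` (as a real number; meaningful under `FiniteKL`). -/
def klReal (ν : Measure ℝ) : ℝ :=
  ∫ s, Real.log ((ν.rnDeriv stdGaussian s).toReal) ∂ν

/-- `s ↦ Σ_i Λ_μ(2 v_i s)`. -/
def hsum (μ : Measure ℝ) (v : ℕ → ℝ) (s : ℝ) : ℝ :=
  ∑' i, logLaplace μ (2 * v i * s)

/-- `Φ_R(v,α)`: constrained Gibbs variational problem on `[-R,R]`. -/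
def PhiR (μ : Measure ℝ) (R : ℝ) (v : ℕ → ℝ) (α : ℝ) : ℝ :=
  sSup { r | ∃ ν : Measure ℝ, IsP2 ν (Set.Icc (-R) R) α ∧ FiniteKL ν ∧
    Integrable (hsum μ v) ν ∧ r = (∫ s, hsum μ v s ∂ν) - klReal ν }

/-- Squared ℓ² norm of a sequence. -/
def l2sq (v : ℕ → ℝ) : ℝ := ∑' i, v i ^ 2

/-- The localized free energy contribution `Φ^loc_N(θ,w)`. -/
def PhiLoc (μ : Measure ℝ) (N : ℕ) (θ : ℝ) (w : ℕ → ℝ) : ℝ :=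
  (1 / (N : ℝ)) * ∑ i ∈ Finset.range N, ∑ j ∈ Finset.range N,
    (if i ≤ j then
      logLaplace μ ((if i = j then Real.sqrt 2 else 2) * (θ * Real.sqrt (N : ℝ) * w i * w j))
    else 0)

/-- The asymptotic restricted annealed free energy `Φ_{N,R}(θ,w)`. -/
def PhiNR (μ : Measure ℝ) (N : ℕ) (R θ : ℝ) (w : ℕ → ℝ) : ℝ :=
  θ ^ 2 * (1 - l2sq w) ^ 2 + PhiLoc μ N θ w +
    PhiR μ R (fun i => θ * w i) (1 - l2sq w) - l2sq w / 2

/-- `𝒥_{N,R}(x,z) = sup_{θ ≥ 0} { J(x,θ) - Φ_{N,R}(θ, q_x(θ) z) }`. -/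
def JNR (μ : Measure ℝ) (N : ℕ) (R x : ℝ) (z : ℕ → ℝ) : ℝ :=
  sSup { r | ∃ θ : ℝ, 0 ≤ θ ∧
    r = Jfun x θ - PhiNR μ N R θ (fun i => qfun x θ * z i) }

/-- The radius-`ρ` ball of sequences supported on the first `n` coordinates. -/
def ballSupp (n : ℕ) (ρ : ℝ) : Set (ℕ → ℝ) :=
  { z | (∀ i, n ≤ i → z i = 0) ∧ l2sq z ≤ ρ ^ 2 }

/-- The finite-`N` rate function `I^μ_N(x)` with `n = ⌊N^{3/4}⌋`, `ζ_x = c/x⁴`. -/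
def rateN (μ : Measure ℝ) (c : ℝ) (N : ℕ) (x : ℝ) : ℝ :=
  sInf { r | ∃ z ∈ ballSupp (Nat.floor ((N : ℝ) ^ ((3:ℝ)/4))) (1 - c / x ^ 4),
    r = JNR μ N ((N : ℝ) ^ ((1:ℝ)/5)) x z }

/-- Embed a finite vector into `ℓ²(ℕ)`. -/
def embed {N : ℕ} (w : Fin N → ℝ) : ℕ → ℝ :=
  fun i => if h : i < N then w ⟨i, h⟩ else 0

/-- `v^{(η)}`: restriction to coordinates with `|v_i| > N^{-1/2+η}`. -/
def truncVec (N : ℕ) (η : ℝ) (v : Fin N → ℝ) : Fin N → ℝ :=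
  fun i => if (N : ℝ) ^ (-(1:ℝ)/2 + η) < |v i| then v i else 0

/-- `v^{(η)}`: restriction to coordinates with `|v_i| ≥ N^{-1/2+η}`. -/
def truncVecGe (N : ℕ) (η : ℝ) (v : Fin N → ℝ) : Fin N → ℝ :=
  fun i => if (N : ℝ) ^ (-(1:ℝ)/2 + η) ≤ |v i| then v i else 0

/-- The quadratic form `⟨u, M u⟩`. -/
def quadForm {N : ℕ} (M : Matrix (Fin N) (Fin N) ℝ) (u : Fin N → ℝ) : ℝ :=
  ∑ i, ∑ j, u i * M i j * u j

/-- Standard Gaussian measure on `ℝ^N`. -/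
def gaussPi (N : ℕ) : Measure (Fin N → ℝ) := Measure.pi fun _ => stdGaussian

/-- The uniform probability measure on the unit sphere `S^{N-1}`. -/
def sphereUniform (N : ℕ) : Measure (Fin N → ℝ) :=
  Measure.map (fun v i => (Real.sqrt (∑ j, v j ^ 2))⁻¹ * v i) (gaussPi N)

/-- The restricted annealed free energy `F_N(θ; U)`. -/
def FNres (μ : Measure ℝ) (N : ℕ) (θ : ℝ) (U : Set (Fin N → ℝ)) : ℝ :=
  (1 / (N : ℝ)) * Real.log (∫ ω,
    (∫ u in U, Real.exp ((N : ℝ) * θ * quadForm (wignerMatrix N ω) u) ∂(sphereUniform N))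
      ∂(wignerMeasure μ N))

/-- The set `𝒰^N_w(ρ,R)` of unit vectors close to `w` on its support and
delocalized elsewhere. -/
def UsetW (N : ℕ) (w : Fin N → ℝ) (ρ R : ℝ) : Set (Fin N → ℝ) :=
  { u | (∑ i, u i ^ 2) = 1 ∧
      Real.sqrt (∑ i, (if w i = 0 then 0 else u i - w i) ^ 2) ≤ ρ ∧
      ∀ i, w i = 0 → |u i| ≤ R / Real.sqrt (N : ℝ) }

/-- Density of the tilted law `P^{(θ,u)}`. -/
def tiltDensity (μ : Measure ℝ) (N : ℕ) (θ : ℝ) (u : Fin N → ℝ) (ω : Config N) : ℝ :=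
  Real.exp ((N : ℝ) * θ * quadForm (wignerMatrix N ω) u) /
    ∫ ω', Real.exp ((N : ℝ) * θ * quadForm (wignerMatrix N ω') u) ∂(wignerMeasure μ N)

/-- The tilted law `P^{(θ,u)}`. -/
def tiltedWigner (μ : Measure ℝ) (N : ℕ) (θ : ℝ) (u : Fin N → ℝ) : Measure (Config N) :=
  (wignerMeasure μ N).withDensity fun ω => ENNReal.ofReal (tiltDensity μ N θ u ω)

/-- The tilted mean `E^{(θ,u)} λ₁`. -/
def tiltedMean (μ : Measure ℝ) (N : ℕ) (θ : ℝ) (u : Fin N → ℝ) : ℝ :=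
  ∫ ω, lambda1 (wignerMatrix N ω) ∂(tiltedWigner μ N θ u)

/-- The ℓ²-Wasserstein (permutation) distance between two vectors. -/
def wasser2 {N : ℕ} (u v : Fin N → ℝ) : ℝ :=
  sInf { r | ∃ σ : Equiv.Perm (Fin N), r = Real.sqrt (∑ i, (u i - v (σ i)) ^ 2) }

/-- A good rate function. -/
def GoodRate (I : ℝ → ℝ≥0∞) : Prop :=
  LowerSemicontinuous I ∧ (∃ x, I x ≠ ⊤) ∧
    ∀ a : ℝ≥0∞, a ≠ ⊤ → IsCompact { x | I x ≤ a }

/-- Large deviation principle with speed `N` for the family of laws `p`. -/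
def LDPle (p : ℕ → Set ℝ → ℝ≥0∞) (I : ℝ → ℝ≥0∞) : Prop :=
  ∀ E : Set ℝ, MeasurableSet E →
    (-(⨅ y ∈ interior E, ENNReal.toEReal (I y)) ≤
      Filter.liminf
        (fun N : ℕ => ((1 / (N : ℝ) * Real.log ((p N E).toReal) : ℝ) : EReal))
        Filter.atTop) ∧
    (Filter.limsup
        (fun N : ℕ => ((1 / (N : ℝ) * Real.log ((p N E).toReal) : ℝ) : EReal))
        Filter.atTop ≤
      -(⨅ y ∈ closure E, ENNReal.toEReal (I y)))

/-- The laws of `λ₁(H_N)`. -/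
def wignerLawFamily (μ : Measure ℝ) : ℕ → Set ℝ → ℝ≥0∞ :=
  fun N E => wignerMeasure μ N { ω | lambda1 (wignerMatrix N ω) ∈ E }

/-- The reduced free energy `F̃_{N,R}(θ, w̌, α̃)`. -/
def FtildeNR (μ : Measure ℝ) (ψinf R θ : ℝ) (w : ℕ → ℝ) (α : ℝ) : ℝ :=
  θ ^ 2 * ((1 - α - l2sq w) ^ 2 + 2 * (1 - α - l2sq w) * α + 2 * psiMax μ * α ^ 2
      + 2 * ψinf * ((l2sq w) ^ 2 + 2 * α * l2sq w))
    + PhiR μ R (fun i => θ * w i) (1 - α - l2sq w) - (α + l2sq w) / 2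

/-- `𝒥̃_{N,R}(x, ž, α̃)`. -/
def JtildeNR (μ : Measure ℝ) (ψinf R x : ℝ) (z : ℕ → ℝ) (α : ℝ) : ℝ :=
  sSup { r | ∃ θ : ℝ, 0 ≤ θ ∧
    r = Jfun x θ - FtildeNR μ ψinf R θ (fun i => qfun x θ * z i) (qfun x θ ^ 2 * α) }

/-- `B_{≥ξ}`: unit-ball sequences with all nonzero entries of modulus in `[ξ,1]`. -/
def BgeXi (ξ : ℝ) : Set (ℕ → ℝ) :=
  { z | l2sq z ≤ 1 ∧ ∀ j, z j = 0 ∨ (ξ ≤ |z j| ∧ |z j| ≤ 1) }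

/-- `Ĩ_{N,ξ}(x,ζ)`. -/
def ItildeN (μ : Measure ℝ) (ψinf : ℝ) (N : ℕ) (ξ x ζ : ℝ) : ℝ :=
  sInf { r | ∃ α : ℝ, α ∈ Set.Icc 0 (1 - ζ) ∧ ∃ z ∈ BgeXi ξ,
    l2sq z ≤ 1 - ζ - α ∧ r = JtildeNR μ ψinf ((N : ℝ) ^ ((1:ℝ)/5)) x z α }

/-- `ĥΦ(θ,α)`. -/
def hPhi (μ : Measure ℝ) (ψinf θ α : ℝ) : ℝ :=
  θ ^ 2 * ((1 - α) ^ 2 + 2 * ψinf * α ^ 2)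
    + sSup { r | ∃ ν : Measure ℝ, IsP2 ν Set.univ (1 - α) ∧ FiniteKL ν ∧
        Integrable (fun s => logLaplace μ (2 * θ * Real.sqrt α * s)) ν ∧
        r = (∫ s, logLaplace μ (2 * θ * Real.sqrt α * s) ∂ν) - klReal ν }
    - α / 2

/-- `Ĵ(x,α)`. -/
def Jhat (μ : Measure ℝ) (ψinf x α : ℝ) : ℝ :=
  sSup { r | ∃ θ : ℝ, 0 ≤ θ ∧ r = Jfun x θ - hPhi μ ψinf θ (qfun x θ ^ 2 * α) }

/-- `inf_{0 ≤ α ≤ 1 - c/x⁴} Ĵ(x,α)`. -/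
def rateIncr (μ : Measure ℝ) (ψinf c x : ℝ) : ℝ :=
  sInf { r | ∃ α ∈ Set.Icc (0:ℝ) (1 - c / x ^ 4), r = Jhat μ ψinf x α }

/-- The set `A*_x` of minimizers. -/
def argminIncr (μ : Measure ℝ) (ψinf c x : ℝ) : Set ℝ :=
  { α | α ∈ Set.Icc (0:ℝ) (1 - c / x ^ 4) ∧ Jhat μ ψinf x α = rateIncr μ ψinf c x }

/-- Bernoulli(p) distribution on `{0,1} ⊂ ℝ`. -/
def bern (p : ℝ) : Measure ℝ :=
  (ENNReal.ofReal p) • Measure.dirac (1:ℝ) + (ENNReal.ofReal (1 - p)) • Measure.dirac (0:ℝ)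

/-- Configuration space for the strictly-upper-triangular entries. -/
abbrev ConfigLT (N : ℕ) : Type := { q : Fin N × Fin N // q.1 < q.2 } → ℝ

/-- Joint law of the i.i.d. Bernoulli(p) entries. -/
def erMeasure (p : ℝ) (N : ℕ) : Measure (ConfigLT N) := Measure.pi fun _ => bern p

/-- The centered adjacency matrix `A - E A` of `G(N,p)`. -/
def erCentered (p : ℝ) (N : ℕ) (ω : ConfigLT N) : Matrix (Fin N) (Fin N) ℝ :=
  fun i j =>
    (if h : i < j then ω ⟨(i, j), h⟩ else if h' : j < i then ω ⟨(j, i), h'⟩ else 0)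
      - (if i = j then 0 else p)

/-- The set of values of `χ(ν) = ∫ h dν - D_KL(ν|γ)` over `𝒫₁([a,b])`. -/
def gibbsSet (a b : ℝ) (h : ℝ → ℝ) : Set ℝ :=
  { r | ∃ ν : Measure ℝ, IsP2 ν (Set.Icc a b) 1 ∧ FiniteKL ν ∧ Integrable h ν ∧
      r = (∫ s, h s ∂ν) - klReal ν }

/-- The exponentially tilted measure `dμ_α = e^{αx - Λ_μ(α)} dμ`. -/
def tiltMeasure (μ : Measure ℝ) (α : ℝ) : Measure ℝ :=
  μ.withDensity fun x => ENNReal.ofReal (Real.exp (α * x - logLaplace μ α))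

/-- CDF of the tilted measure. -/
def tiltCDF (μ : Measure ℝ) (α x : ℝ) : ℝ := (tiltMeasure μ α (Set.Iic x)).toReal

/-- `φ_α(t) = sup { x : F_α(x) ≤ t }`. -/
def tiltQuantile (μ : Measure ℝ) (α t : ℝ) : ℝ := sSup { x | tiltCDF μ α x ≤ t }

/-! The dilation `D_a s = a s` maps `γ` to the centred Gaussian of variance `a²`, whose density
with respect to `γ` is `a⁻¹ exp ((1 - a⁻²) x² / 2)`. By the chain rule for Radon–Nikodym
derivatives, `log d(D_a)_*ν/dγ (a s) = log dν/dγ (s) - log a + (a² - 1) s² / 2` for `ν`-a.e. `s`;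
integrating against `ν`, whose second moment is `1`, gives the entropy identity. Since
`ν ↦ (D_a)_*ν` is a bijection from `𝒫₁(a⁻¹I)` onto `𝒫_{a²}(I)` with inverse `D_{a⁻¹}`, the two
suprema differ by the same constant. -/

instance : IsProbabilityMeasure stdGaussian :=
  inferInstanceAs (IsProbabilityMeasure (gaussianReal 0 1))

lemma gaussianPDFReal_zero_sq_eq_mul {a : ℝ} (ha : 0 < a) (x : ℝ) :
    gaussianPDFReal 0 (NNReal.mk (a ^ 2) (sq_nonneg a)) x =
      gaussianPDFReal 0 1 x * (a⁻¹ * Real.exp ((1 - a⁻¹ ^ 2) * x ^ 2 / 2)) := by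
  simp only [gaussianPDFReal, NNReal.coe_one, NNReal.coe_mk, mul_one, sub_zero]
  rw [Real.sqrt_mul (by positivity) (a ^ 2), Real.sqrt_sq ha.le, mul_inv,
    mul_mul_mul_comm, ← Real.exp_add]
  congr 2
  field_simp
  ring

lemma stdGaussian_map_const_mul {a : ℝ} (ha : 0 < a) :
    stdGaussian.map (a * ·) =
      stdGaussian.withDensity
        fun x => ENNReal.ofReal (a⁻¹ * Real.exp ((1 - a⁻¹ ^ 2) * x ^ 2 / 2)) := by
  have hv : NNReal.mk (a ^ 2) (sq_nonneg a) ≠ 0 := by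
    simpa [← NNReal.coe_ne_zero] using ha.ne'
  rw [stdGaussian, gaussianReal_map_const_mul, mul_zero, mul_one,
    gaussianReal_of_var_ne_zero _ hv, gaussianReal_of_var_ne_zero _ one_ne_zero,
    ← withDensity_mul _ (measurable_gaussianPDF _ _) (by fun_prop)]
  congr 1
  ext x
  simp only [gaussianPDF, Pi.mul_apply, gaussianPDFReal_zero_sq_eq_mul ha,
    ENNReal.ofReal_mul (gaussianPDFReal_nonneg _ _ _)]

lemma isP2_map_const_mul_iff {a : ℝ} (ha : a ≠ 0) {ν : Measure ℝ} {S : Set ℝ} {α : ℝ} :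
    IsP2 (ν.map (a * ·)) S (a ^ 2 * α) ↔ IsP2 ν ((a * ·) ⁻¹' S) α := by
  have hD := measurableEmbedding_mulLeft₀ ha
  have hsq : (fun s : ℝ => s ^ 2) ∘ (a * ·) = fun s => a ^ 2 * s ^ 2 := by
    ext s; simp [mul_pow]
  simp only [IsP2, isProbabilityMeasure_iff, hD.map_apply, Set.preimage_univ, Set.preimage_compl,
    hD.integrable_map_iff, hD.integral_map, hsq, mul_pow, integral_const_mul,
    integrable_const_mul_iff (pow_ne_zero 2 ha).isUnit, mul_right_inj' (pow_ne_zero 2 ha)]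

lemma rnDeriv_map_const_mul_stdGaussian {a : ℝ} (ha : 0 < a) {ν : Measure ℝ} [SigmaFinite ν]
    (hν : ν ≪ stdGaussian) :
    ∀ᵐ s ∂ν, (ν.map (a * ·)).rnDeriv stdGaussian (a * s) =
      ENNReal.ofReal (a⁻¹ * Real.exp ((a ^ 2 - 1) * s ^ 2 / 2)) * ν.rnDeriv stdGaussian s := by
  have hD := measurableEmbedding_mulLeft₀ ha.ne'
  have := hD.sigmaFinite_map (μ := ν)
  set ρ : ℝ → ℝ≥0∞ := fun x => ENNReal.ofReal (a⁻¹ * Real.exp ((1 - a⁻¹ ^ 2) * x ^ 2 / 2))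
  have hρ : Measurable ρ := by fun_prop
  have hγD : stdGaussian.map (a * ·) = stdGaussian.withDensity ρ := stdGaussian_map_const_mul ha
  have hγD_ac : stdGaussian.map (a * ·) ≪ stdGaussian :=
    hγD ▸ withDensity_absolutelyContinuous _ _
  have hchain : ∀ᵐ x ∂(stdGaussian.map (a * ·)), (ν.map (a * ·)).rnDeriv stdGaussian x =
      (ν.map (a * ·)).rnDeriv (stdGaussian.map (a * ·)) x * ρ x := by
    filter_upwards [Measure.rnDeriv_mul_rnDeriv' (μ := ν.map (a * ·)) hγD_ac,
      hγD_ac (hγD ▸ Measure.rnDeriv_withDensity stdGaussian hρ)] with x hx hρx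
    rw [← hx, Pi.mul_apply, hρx]
  filter_upwards [hν.ae_le (hD.ae_map_iff.mp hchain), hν.ae_le (hD.rnDeriv_map ν stdGaussian)]
    with s hs hmap
  rw [hs, hmap, mul_comm]
  simp only [ρ]
  congr 3
  field_simp

lemma finiteKL_iff_integrable_llr {ν : Measure ℝ} :
    FiniteKL ν ↔ ν ≪ stdGaussian ∧ Integrable (llr ν stdGaussian) ν := Iff.rfl

lemma klReal_eq_integral_llr (ν : Measure ℝ) : klReal ν = ∫ s, llr ν stdGaussian s ∂ν := rfl

lemma llr_map_const_mul_stdGaussian {a : ℝ} (ha : 0 < a) {ν : Measure ℝ} [SigmaFinite ν]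
    (hν : ν ≪ stdGaussian) :
    (fun s => llr (ν.map (a * ·)) stdGaussian (a * s)) =ᵐ[ν]
      fun s => llr ν stdGaussian s - Real.log a + (a ^ 2 - 1) / 2 * s ^ 2 := by
  filter_upwards [rnDeriv_map_const_mul_stdGaussian ha hν, Measure.rnDeriv_pos hν,
    hν.ae_le (Measure.rnDeriv_lt_top ν stdGaussian)] with s hs hpos hfin
  have hρ : 0 < a⁻¹ * Real.exp ((a ^ 2 - 1) * s ^ 2 / 2) := by positivity
  rw [llr, llr, hs, ENNReal.toReal_mul, ENNReal.toReal_ofReal hρ.le,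
    Real.log_mul hρ.ne' (ENNReal.toReal_pos hpos.ne' hfin.ne).ne',
    Real.log_mul (inv_ne_zero ha.ne') (Real.exp_ne_zero _), Real.log_inv, Real.log_exp]
  ring

lemma FiniteKL.map_const_mul {a : ℝ} (ha : 0 < a) {ν : Measure ℝ} [IsFiniteMeasure ν]
    (hν : FiniteKL ν) (hν₂ : Integrable (fun s => s ^ 2) ν) :
    FiniteKL (ν.map (a * ·)) := by
  obtain ⟨hν_ac, hν_llr⟩ := finiteKL_iff_integrable_llr.mp hν
  have hD := measurableEmbedding_mulLeft₀ ha.ne'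
  have hγ : stdGaussian.map (a * ·) ≪ stdGaussian :=
    stdGaussian_map_const_mul ha ▸ withDensity_absolutelyContinuous _ _
  refine finiteKL_iff_integrable_llr.mpr
    ⟨(hν_ac.map hD.measurable).trans hγ, hD.integrable_map_iff.mpr ?_⟩
  exact ((hν_llr.sub (integrable_const _)).add (hν₂.const_mul _)).congr
    (llr_map_const_mul_stdGaussian ha hν_ac).symm

lemma klReal_map_const_mul {a : ℝ} (ha : 0 < a) {ν : Measure ℝ} [IsProbabilityMeasure ν]
    (hν : FiniteKL ν) (hν₂ : Integrable (fun s => s ^ 2) ν) :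
    klReal (ν.map (a * ·)) = klReal ν - Real.log a + (a ^ 2 - 1) / 2 * ∫ s, s ^ 2 ∂ν := by
  obtain ⟨hν_ac, hν_llr⟩ := finiteKL_iff_integrable_llr.mp hν
  have hD := measurableEmbedding_mulLeft₀ ha.ne'
  have hν_llr' : Integrable (fun s => llr ν stdGaussian s - Real.log a) ν :=
    hν_llr.sub (integrable_const _)
  rw [klReal_eq_integral_llr, klReal_eq_integral_llr, hD.integral_map,
    integral_congr_ae (llr_map_const_mul_stdGaussian ha hν_ac),
    integral_add hν_llr' (hν₂.const_mul _), integral_sub hν_llr (integrable_const _),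
    integral_const_mul, integral_const, probReal_univ, one_smul]

lemma integral_comp_const_mul_sub_klReal (h : ℝ → ℝ) {a : ℝ} (ha : 0 < a) {ν : Measure ℝ}
    [IsProbabilityMeasure ν] (hν : FiniteKL ν) (hν₂ : Integrable (fun s => s ^ 2) ν) :
    (∫ s, h (a * s) ∂ν) - klReal ν =
      (∫ s, h s ∂(ν.map (a * ·))) - klReal (ν.map (a * ·))
        - (1 - a ^ 2) / 2 * (∫ s, s ^ 2 ∂ν) - Real.log a := by
  rw [(measurableEmbedding_mulLeft₀ ha.ne').integral_map, klReal_map_const_mul ha hν hν₂]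
  ring

lemma _root_.EReal.sSup_image_sub_coe (S : Set EReal) (c : ℝ) :
    sSup ((· - (c : EReal)) '' S) = sSup S - c := by
  have hcont : ContinuousAt (fun x : EReal => x + ((-c : ℝ) : EReal)) (sSup S) :=
    ContinuousAt.comp (f := fun x : EReal => (x, ((-c : ℝ) : EReal)))
      (g := fun p : EReal × EReal => p.1 + p.2)
      (EReal.continuousAt_add (.inr (EReal.coe_ne_bot _)) (.inr (EReal.coe_ne_top _)))
      (continuousAt_id.prodMk continuousAt_const)
  simp only [sub_eq_add_neg, ← EReal.coe_neg]
  exact (Monotone.map_sSup_of_continuousAt hcont (fun x y hxy => add_le_add_left hxy _)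
    (by simp)).symm

def gibbsValues (h : ℝ → ℝ) (S : Set ℝ) (α : ℝ) : Set EReal :=
  { r | ∃ ν : Measure ℝ, IsP2 ν S α ∧ FiniteKL ν ∧ Integrable h ν ∧
      r = (((∫ s, h s ∂ν) - klReal ν : ℝ) : EReal) }

lemma gibbsValues_comp_const_mul (h : ℝ → ℝ) (S : Set ℝ) {a : ℝ} (ha : 0 < a) (α : ℝ) :
    gibbsValues (fun s => h (a * s)) ((a * ·) ⁻¹' S) α =
      (· - ((Real.log a : ℝ) : EReal)) ''
        ((· - (((1 - a ^ 2) / 2 * α : ℝ) : EReal)) '' gibbsValues h S (a ^ 2 * α)) := by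
  have hD := measurableEmbedding_mulLeft₀ ha.ne'
  ext r
  constructor
  · rintro ⟨ν, hP2, hkl, hint, rfl⟩
    have := hP2.1
    refine ⟨_, ⟨_, ⟨ν.map (a * ·), (isP2_map_const_mul_iff ha.ne').mpr hP2,
      hkl.map_const_mul ha hP2.2.2.1, hD.integrable_map_iff.mpr hint, rfl⟩, rfl⟩, ?_⟩
    rw [integral_comp_const_mul_sub_klReal h ha hkl hP2.2.2.1, hP2.2.2.2]
    norm_cast
  · rintro ⟨_, ⟨_, ⟨ν', hP2', hkl', hint', rfl⟩, rfl⟩, rfl⟩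
    have := hP2'.1
    set ν := ν'.map (a⁻¹ * ·)
    have hν : FiniteKL ν := hkl'.map_const_mul (inv_pos.mpr ha) hP2'.2.2.1
    have hν' : ν.map (a * ·) = ν' := by
      simpa [ν, MeasurableEquiv.symm_mulLeft₀] using
        (MeasurableEquiv.mulLeft₀ a ha.ne').map_map_symm (ν := ν')
    rw [← hν'] at hP2' hint' ⊢
    have hP2 := (isP2_map_const_mul_iff ha.ne').mp hP2'
    have := hP2.1
    refine ⟨ν, hP2, hν, hD.integrable_map_iff.mp hint', ?_⟩
    rw [integral_comp_const_mul_sub_klReal h ha hν hP2.2.2.1, hP2.2.2.2]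
    norm_cast

theorem dilation_variational_general
    (h : ℝ → ℝ) (I : Set ℝ)
    (a : ℝ) (ha : 0 < a) :
    (∀ ν : Measure ℝ, IsP2 ν ((fun s => a * s) ⁻¹' I) 1 →
      IsP2 (Measure.map (fun s => a * s) ν) I (a ^ 2) ∧
      (FiniteKL ν → Integrable (fun s => h (a * s)) ν →
        FiniteKL (Measure.map (fun s => a * s) ν) ∧
        Integrable h (Measure.map (fun s => a * s) ν) ∧
        (∫ s, h (a * s) ∂ν) - klReal ν =
          (∫ s, h s ∂(Measure.map (fun s => a * s) ν))
            - klReal (Measure.map (fun s => a * s) ν)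
            - (1 - a ^ 2) / 2 - Real.log a)) ∧
    sSup { r : EReal | ∃ ν : Measure ℝ, IsP2 ν ((fun s => a * s) ⁻¹' I) 1 ∧ FiniteKL ν ∧
        Integrable (fun s => h (a * s)) ν ∧
        r = (((∫ s, h (a * s) ∂ν) - klReal ν : ℝ) : EReal) } =
      sSup { r : EReal | ∃ ν : Measure ℝ, IsP2 ν I (a ^ 2) ∧ FiniteKL ν ∧
        Integrable h ν ∧ r = (((∫ s, h s ∂ν) - klReal ν : ℝ) : EReal) }
        - (((1 - a ^ 2) / 2 : ℝ) : EReal) - ((Real.log a : ℝ) : EReal) := by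
  have hD := measurableEmbedding_mulLeft₀ ha.ne'
  refine ⟨fun ν hν => ?_, ?_⟩
  · have := hν.1
    exact ⟨by simpa using (isP2_map_const_mul_iff ha.ne' (α := 1)).mpr hν, fun hkl hint =>
      ⟨hkl.map_const_mul ha hν.2.2.1, hD.integrable_map_iff.mpr hint, by
        rw [integral_comp_const_mul_sub_klReal h ha hkl hν.2.2.1, hν.2.2.2, mul_one]⟩⟩
  · have hsup := congrArg sSup (gibbsValues_comp_const_mul h I ha 1)
    rw [mul_one, mul_one, EReal.sSup_image_sub_coe, EReal.sSup_image_sub_coe] at hsup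
    exact hsup

/-- Lemma (lem:dilate): behavior of the Gibbs variational problem under dilations. -/
theorem dilation_variational
    (h : ℝ → ℝ) (hmeas : Measurable h) (I : Set ℝ) (hI : I.OrdConnected)
    (a : ℝ) (ha : 0 < a) :
    (∀ ν : Measure ℝ, IsP2 ν ((fun s => a * s) ⁻¹' I) 1 →
      IsP2 (Measure.map (fun s => a * s) ν) I (a ^ 2) ∧
      (FiniteKL ν → Integrable (fun s => h (a * s)) ν →
        FiniteKL (Measure.map (fun s => a * s) ν) ∧
        Integrable h (Measure.map (fun s => a * s) ν) ∧
        (∫ s, h (a * s) ∂ν) - klReal ν =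
          (∫ s, h s ∂(Measure.map (fun s => a * s) ν))
            - klReal (Measure.map (fun s => a * s) ν)
            - (1 - a ^ 2) / 2 - Real.log a)) ∧
    sSup { r : EReal | ∃ ν : Measure ℝ, IsP2 ν ((fun s => a * s) ⁻¹' I) 1 ∧ FiniteKL ν ∧
        Integrable (fun s => h (a * s)) ν ∧
        r = (((∫ s, h (a * s) ∂ν) - klReal ν : ℝ) : EReal) } =
      sSup { r : EReal | ∃ ν : Measure ℝ, IsP2 ν I (a ^ 2) ∧ FiniteKL ν ∧
        Integrable h ν ∧ r = (((∫ s, h s ∂ν) - klReal ν : ℝ) : EReal) }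
        - (((1 - a ^ 2) / 2 : ℝ) : EReal) - ((Real.log a : ℝ) : EReal) :=
  dilation_variational_general h I a ha

end WignerLDP
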